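/- arXiv:1502.06554 — 2 statements merged into one kernel-verified Lean document; each statement's English description precedes it below -/
import Mathlib

section
/- Let B be a real Banach space and q ∈ ℕ. There exists a constant c_q > 0 depending only on q such that for any A ∈ L(B), any q-dimensional subspace E ⊆ B, and any v ∈ E with v ≠ 0, one has (|A v| / |v|) · ‖A|_E‖^{q−1} ≥ c_q · det(A | E), where ‖A|_E‖ is the operator norm of the restriction of A to E. -/
/-!
Let `w` be the unit vector along `v` and `m` a norming functional of `w` on `E`.
Every `y` in the unit ball of `E` splits as `m y • w + (y - m y • w)` with `|m y| ≤ 1`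
and `‖y - m y • w‖ ≤ 2`, so `A` maps the unit ball of `E` into a slab in `A E`: the segment
`[-A w, A w]` plus a ball of radius `2 ‖A|_E‖` in the hyperplane `A (ker m)`. The linear map
stretching by `2 ‖A w‖` along `A w` and by `4 ‖A|_E‖` along that hyperplane carries the unit
ball onto a superset of the slab, so `det(A|E) ≤ 2 ‖A w‖ (4 ‖A|_E‖)^(q-1)`.
-/

open MeasureTheory Filter Metric Set
open scoped ENNReal NNReal Topology

namespace BanachMET

noncomputable section

/-- `ω q`: the Lebesgue volume of the Euclidean unit ball in `ℝ^q`. -/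
def ballVol (q : ℕ) : ℝ≥0∞ :=
  volume (Metric.closedBall (0 : EuclideanSpace ℝ (Fin q)) 1)

/-- Extended logarithm of a real number, with the convention `log t = -∞` for `t ≤ 0`. -/
def elog (t : ℝ) : EReal := if t ≤ 0 then ⊥ else ((Real.log t : ℝ) : EReal)

/-- Extended logarithm on `ℝ≥0∞`, with `log 0 = -∞` and `log ⊤ = ⊤`. -/
def elogE (t : ℝ≥0∞) : EReal :=
  if t = 0 then ⊥ else if t = ⊤ then ⊤ else ((Real.log t.toReal : ℝ) : EReal)

variable {B B' : Type*} [NormedAddCommGroup B] [NormedSpace ℝ B]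
  [NormedAddCommGroup B'] [NormedSpace ℝ B']

section Volume
variable [MeasurableSpace B] [BorelSpace B] [MeasurableSpace B'] [BorelSpace B']

/-- The induced volume `m_E` on a finite dimensional subspace `E ⊆ B`: the unique
translation-invariant Borel measure on `E` assigning measure `ω_q` to the closed unit
ball of `E`, where `q = dim E`.  (Junk value `0` if `E` is infinite dimensional.) -/
def inducedVolume (E : Submodule ℝ B) : Measure E := by
  classical
  exact if h : FiniteDimensional ℝ E then
    (ballVol (Module.finrank ℝ E) /
        (Module.finBasis ℝ E).addHaar (Metric.closedBall (0 : E) 1)) •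
      (Module.finBasis ℝ E).addHaar
  else 0

/-- `det(A|E)`: the determinant of `A` on the finite dimensional subspace `E`,
defined as the ratio `m_{AE}(A(B_E)) / m_E(B_E)` (note `m_E(B_E) = ω_q`) if `A`
is injective on `E`, and `0` otherwise. -/
def detOn (A : B →L[ℝ] B') (E : Submodule ℝ B) : ℝ≥0∞ := by
  classical
  exact if Set.InjOn A (E : Set B) then
    inducedVolume (E.map (A : B →ₗ[ℝ] B'))
        ((Subtype.val) ⁻¹' (A '' ((Subtype.val : E → B) '' Metric.closedBall (0 : E) 1))) /
      ballVol (Module.finrank ℝ E)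
  else 0

/-- `V_q(A)`: the maximal `q`-dimensional volume growth of `A`
(with the convention `V_0(A) = 1`). -/
def maxVol (q : ℕ) (A : B →L[ℝ] B') : ℝ≥0∞ := by
  classical
  exact if q = 0 then 1 else
    ⨆ (E : Submodule ℝ B) (_ : FiniteDimensional ℝ E ∧ Module.finrank ℝ E = q), detOn A E

end Volume

/-- The measure of noncompactness `|A|_α`. -/
def alphaMeasure (A : B →L[ℝ] B') : ℝ :=
  sInf {r : ℝ | 0 < r ∧ ∃ s : Finset B', (A '' Metric.closedBall 0 1) ⊆ ⋃ y ∈ s, Metric.ball y r}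

/-- The annihilator `F° ⊆ B*` of a subspace `F ⊆ B` in the continuous dual. -/
def annih (F : Submodule ℝ B) : Submodule ℝ (B →L[ℝ] ℝ) where
  carrier := {ℓ | ∀ v ∈ F, ℓ v = 0}
  add_mem' := by
    intro a b ha hb v hv
    simp [ha v hv, hb v hv]
  zero_mem' := by intro v hv; simp
  smul_mem' := by
    intro c ℓ h v hv
    simp [h v hv]

/-- The codimension of a subspace: the dimension of its annihilator in `B*`. -/
def codim (F : Submodule ℝ B) : ℕ := Module.finrank ℝ (annih F)

/-- `sin θ(E,F)` where `θ(E,F)` is the minimal angle from `E` to `F`. -/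
def sinAngle (E F : Submodule ℝ B) : ℝ :=
  sInf {d : ℝ | ∃ e ∈ E, ‖e‖ = 1 ∧ ∃ f ∈ F, d = ‖e - f‖}

/-- The norm of the (possibly unbounded) projection onto `E` parallel to `F`. -/
def projNorm (E F : Submodule ℝ B) : ℝ :=
  sSup {r : ℝ | ∃ e ∈ E, ∃ f ∈ F, ‖e + f‖ ≤ 1 ∧ r = ‖e‖}

/-- The Hausdorff distance `d_H` between the unit spheres of two subspaces. -/
def sphDist (E F : Submodule ℝ B) : ℝ :=
  Metric.hausdorffDist ((E : Set B) ∩ Metric.sphere (0 : B) 1)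
    ((F : Set B) ∩ Metric.sphere (0 : B) 1)

/-- The gap `δ(U,V)`. -/
def gap (U V : Submodule ℝ B) : ℝ :=
  sSup {d : ℝ | ∃ u ∈ U, ‖u‖ = 1 ∧ d = Metric.infDist u (V : Set B)}

/-- `π` is the (bounded) projection onto `E` parallel to `F`. -/
def IsProjOnto (E F : Submodule ℝ B) (π : B →L[ℝ] B) : Prop :=
  (∀ e ∈ E, π e = e) ∧ ∀ f ∈ F, π f = 0

/-- The Gelfand numbers `c_q(A)` (for `q ≥ 1`). -/
def gelfand (q : ℕ) (A : B →L[ℝ] B') : ℝ := by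
  classical
  exact if q ≤ 1 then ‖A‖
  else sInf {c : ℝ | ∃ R : Submodule ℝ B, IsClosed (R : Set B) ∧ codim R = q - 1 ∧
    c = ‖A.comp R.subtypeL‖}

/-- `p` is an inner product on the subspace `E ⊆ B`. -/
structure IsInnerOn (E : Submodule ℝ B) (p : B → B → ℝ) : Prop where
  add_left : ∀ u ∈ E, ∀ v ∈ E, ∀ w ∈ E, p (u + v) w = p u w + p v w
  smul_left : ∀ (c : ℝ), ∀ u ∈ E, ∀ v ∈ E, p (c • u) v = c * p u v
  symm : ∀ u ∈ E, ∀ v ∈ E, p u v = p v u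
  posdef : ∀ u ∈ E, u ≠ 0 → 0 < p u u

/-- Iterates `T^n_x = T_{f^{n-1} x} ∘ ⋯ ∘ T_x` of the cocycle `T` over the base map `f`. -/
def iter {X : Type*} (T : X → B →L[ℝ] B) (f : X → X) : ℕ → X → B →L[ℝ] B
  | 0, _ => ContinuousLinearMap.id ℝ B
  | n + 1, x => (iter T f n (f x)).comp (T x)

/-- Uniform measurability: `T` is the pointwise norm limit of a sequence of
finite-valued measurable maps. -/
def UniformlyMeasurable {X : Type*} [MeasurableSpace X] (T : X → B →L[ℝ] B) : Prop :=
  ∃ S : ℕ → X → B →L[ℝ] B,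
    (∀ n, (Set.range (S n)).Finite) ∧
    (∀ n (A : B →L[ℝ] B), MeasurableSet {x | S n x = A}) ∧
    ∀ x, Tendsto (fun n => ‖S n x - T x‖) atTop (𝓝 0)

/-- The slow-growing set `F_λ(x)`. -/
def slowSpace {X : Type*} (T : X → B →L[ℝ] B) (f : X → X) (lam : ℝ) (x : X) : Set B :=
  {v : B | Filter.limsup (fun n : ℕ => (((n : ℝ)⁻¹ : ℝ) : EReal) * elog ‖iter T f n x v‖)
      atTop ≤ (lam : EReal)}

open Module

theorem det_smul_add_smulRight {K V : Type*} [Field K] [AddCommGroup V] [Module K V]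
    [FiniteDimensional K V] (f : V →ₗ[K] K) {u : V} (hfu : f u = 1) (a : K) {t : K}
    (ht : t ≠ 0) :
    LinearMap.det (t • LinearMap.id + (a - t) • f.smulRight u) = a * t ^ (finrank K V - 1) := by
  obtain ⟨n, hn⟩ : ∃ n, finrank K V = n + 1 := Nat.exists_eq_succ_of_ne_zero
    (finrank_pos_iff_exists_ne_zero.2 ⟨u, fun h => by simp [h] at hfu⟩).ne'
  have hT : t • LinearMap.id + (a - t) • f.smulRight u =
      t • LinearMap.transvection f (((a - t) / t) • u) := by
    ext x
    simp only [LinearMap.add_apply, LinearMap.smul_apply, LinearMap.id_apply,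
      LinearMap.smulRight_apply, LinearMap.transvection.apply, smul_add, smul_smul]
    congr 2
    field_simp
  rw [hT, LinearMap.det_smul, LinearMap.transvection.det, map_smul, hfu, smul_eq_mul, mul_one,
    hn, Nat.add_sub_cancel, pow_succ]
  field_simp
  ring

theorem addHaar_slab_le {F : Type*} [NormedAddCommGroup F] [NormedSpace ℝ F]
    [FiniteDimensional ℝ F] [MeasurableSpace F] [BorelSpace F] (μ : Measure F)
    [μ.IsAddHaarMeasure] (f : F →ₗ[ℝ] ℝ) {u : F} (hfu : f u = 1) {r : ℝ} (hr : 0 < r) :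
    μ {x | |f x| ≤ 1 ∧ ‖x - f x • u‖ ≤ r} ≤
      ENNReal.ofReal (2 * ‖u‖ * (2 * r) ^ (finrank ℝ F - 1)) * μ (closedBall 0 1) := by
  have hu : 0 < ‖u‖ := norm_pos_iff.2 fun h => by simp [h] at hfu
  set a := 2 * ‖u‖
  set t := 2 * r
  have ha : 0 < a := by positivity
  have ht : 0 < t := by positivity
  set T := t • LinearMap.id + (a - t) • f.smulRight u
  -- `T` stretches by `a` along `u` and by `t` along `ker f`
  have hslab : {x | |f x| ≤ 1 ∧ ‖x - f x • u‖ ≤ r} ⊆ T '' closedBall 0 1 := by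
    rintro x ⟨hfx, hx⟩
    have hker : f (x - f x • u) = 0 := by simp [hfu]
    refine ⟨(f x / a) • u + t⁻¹ • (x - f x • u), ?_, ?_⟩
    · rw [mem_closedBall_zero_iff]
      calc ‖(f x / a) • u + t⁻¹ • (x - f x • u)‖
          ≤ |f x| / a * ‖u‖ + t⁻¹ * r := by
            refine (norm_add_le _ _).trans (add_le_add ?_ ?_)
            · rw [norm_smul, Real.norm_eq_abs, abs_div, abs_of_pos ha]
            · rw [norm_smul, Real.norm_eq_abs, abs_of_pos (inv_pos.2 ht)]
              exact mul_le_mul_of_nonneg_left hx (inv_pos.2 ht).le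
        _ ≤ 1 / a * ‖u‖ + t⁻¹ * r := by gcongr
        _ = 1 := by field_simp; ring
    · simp only [T, LinearMap.add_apply, LinearMap.smul_apply, LinearMap.id_apply,
        LinearMap.smulRight_apply, map_add, map_smul, hker, hfu]
      match_scalars <;> field_simp
      ring
  calc μ {x | |f x| ≤ 1 ∧ ‖x - f x • u‖ ≤ r}
      ≤ μ (T '' closedBall 0 1) := measure_mono hslab
    _ = ENNReal.ofReal |LinearMap.det T| * μ (closedBall 0 1) := μ.addHaar_image_linearMap T _
    _ = ENNReal.ofReal (a * t ^ (finrank ℝ F - 1)) * μ (closedBall 0 1) := by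
        rw [det_smul_add_smulRight f hfu a ht.ne', abs_of_pos (by positivity)]

def equivMapOfInjOn {R M M₂ : Type*} [Semiring R] [AddCommMonoid M] [Module R M]
    [AddCommMonoid M₂] [Module R M₂] (A : M →ₗ[R] M₂) (E : Submodule R M)
    (h : InjOn A E) : E ≃ₗ[R] E.map A :=
  (LinearEquiv.ofInjective (A.domRestrict E) fun x y hxy => Subtype.ext (h x.2 y.2 hxy)).trans
    (LinearEquiv.ofEq _ _ (LinearMap.range_domRestrict E A))

@[simp]
theorem coe_equivMapOfInjOn_apply {R M M₂ : Type*} [Semiring R] [AddCommMonoid M] [Module R M]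
    [AddCommMonoid M₂] [Module R M₂] (A : M →ₗ[R] M₂) (E : Submodule R M)
    (h : InjOn A E) (y : E) : (equivMapOfInjOn A E h y : M₂) = A y :=
  rfl

theorem ballVol_ne_zero (q : ℕ) : ballVol q ≠ 0 :=
  (measure_closedBall_pos volume _ one_pos).ne'

theorem ballVol_ne_top (q : ℕ) : ballVol q ≠ ⊤ :=
  (isCompact_closedBall _ _).measure_lt_top.ne

section Det

variable [MeasurableSpace B'] [BorelSpace B']

theorem detOn_eq_div_of_injOn (A : B →L[ℝ] B') (E : Submodule ℝ B) [FiniteDimensional ℝ E]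
    (h : InjOn A E) :
    detOn A E = (finBasis ℝ (E.map (A : B →ₗ[ℝ] B'))).addHaar
        (equivMapOfInjOn (A : B →ₗ[ℝ] B') E h '' closedBall 0 1) /
      (finBasis ℝ (E.map (A : B →ₗ[ℝ] B'))).addHaar (closedBall 0 1) := by
  set g := equivMapOfInjOn (A : B →ₗ[ℝ] B') E h
  have himage : Subtype.val ⁻¹' (A '' (Subtype.val '' closedBall (0 : E) 1)) =
      g '' closedBall 0 1 := by
    ext x
    simp [g, Subtype.ext_iff, and_assoc]
  have hrank : finrank ℝ (E.map (A : B →ₗ[ℝ] B')) = finrank ℝ E := g.finrank_eq.symm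
  have hball := ballVol_ne_zero (finrank ℝ E)
  have hball' := ballVol_ne_top (finrank ℝ E)
  simp only [detOn, h, if_true, inducedVolume, dif_pos (inferInstance : FiniteDimensional ℝ _),
    Measure.smul_apply, smul_eq_mul, himage, hrank]
  simp only [div_eq_mul_inv]
  set μ := (finBasis ℝ (E.map (A : B →ₗ[ℝ] B'))).addHaar
  calc _ = ballVol (finrank ℝ E) * (ballVol (finrank ℝ E))⁻¹ *
        (μ (g '' closedBall 0 1) * (μ (closedBall 0 1))⁻¹) := by ring
    _ = _ := by rw [ENNReal.mul_inv_cancel hball hball', one_mul]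

theorem detOn_le_of_norm_eq_one (A : B →L[ℝ] B') (E : Submodule ℝ B) [FiniteDimensional ℝ E]
    {w : E} (hw : ‖w‖ = 1) :
    detOn A E ≤
      ENNReal.ofReal (2 * ‖A w‖ * (4 * ‖A.comp E.subtypeL‖) ^ (finrank ℝ E - 1)) := by
  by_cases h : InjOn A E
  swap
  · simp [detOn, h]
  set N := ‖A.comp E.subtypeL‖
  set g := equivMapOfInjOn (A : B →ₗ[ℝ] B') E h
  have hbound (y : E) : ‖A y‖ ≤ N * ‖y‖ := (A.comp E.subtypeL).le_opNorm y
  have hN : 0 < N := by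
    have hAw : A w ≠ 0 := fun h0 => by
      have hw0 : (w : B) = 0 := h w.2 E.zero_mem (by simpa using h0)
      simp [hw0] at hw
    simpa [hw] using (norm_pos_iff.2 hAw).trans_le (hbound w)
  obtain ⟨m, hm, hmw⟩ := exists_dual_vector ℝ w (by simp [hw])
  set f : E.map (A : B →ₗ[ℝ] B') →ₗ[ℝ] ℝ := (m : E →ₗ[ℝ] ℝ) ∘ₗ g.symm
  have hfg (y : E) : f (g y) = m y := by simp [f]
  have hfu : f (g w) = 1 := by rw [hfg, hmw, hw]; rfl
  have hslab : g '' closedBall 0 1 ⊆ {x | |f x| ≤ 1 ∧ ‖x - f x • g w‖ ≤ 2 * N} := by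
    rintro _ ⟨y, hy, rfl⟩
    rw [mem_closedBall_zero_iff] at hy
    have hmy : |m y| ≤ 1 := by
      simpa [hm] using (m.le_opNorm y).trans (mul_le_of_le_one_right (norm_nonneg _) hy)
    refine ⟨by rwa [hfg], ?_⟩
    calc ‖g y - f (g y) • g w‖ = ‖A ↑(y - m y • w)‖ := by
          rw [hfg, ← map_smul, ← map_sub]; rfl
      _ ≤ N * (1 + 1) := by
          refine (hbound _).trans (mul_le_mul_of_nonneg_left ?_ hN.le)
          refine (norm_sub_le _ _).trans (add_le_add hy ?_)
          rwa [norm_smul, hw, mul_one]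
      _ = 2 * N := by ring
  rw [detOn_eq_div_of_injOn A E h]
  refine ENNReal.div_le_of_le_mul ((measure_mono hslab).trans
    ((addHaar_slab_le _ f hfu (by positivity : 0 < 2 * N)).trans_eq ?_))
  congr 2
  rw [← g.finrank_eq, show ‖g w‖ = ‖A w‖ from rfl]
  ring

end Det

theorem statement14_general
    {B : Type*} [NormedAddCommGroup B] [NormedSpace ℝ B]
    [MeasurableSpace B] [BorelSpace B] (q : ℕ) :
    ∃ c : ℝ, 0 < c ∧
      ∀ (A : B →L[ℝ] B) (E : Submodule ℝ B), FiniteDimensional ℝ E →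
        Module.finrank ℝ E = q → ∀ v ∈ E, v ≠ 0 →
        ENNReal.ofReal c * detOn A E ≤
          ENNReal.ofReal ((‖A v‖ / ‖v‖) * ‖A.comp E.subtypeL‖ ^ (q - 1)) := by
  refine ⟨(2 * 4 ^ (q - 1))⁻¹, by positivity, ?_⟩
  rintro A E hE rfl v hv hv0
  have hv0' : ‖v‖ ≠ 0 := norm_ne_zero_iff.2 hv0
  set w : E := ‖v‖⁻¹ • ⟨v, hv⟩
  have hw : ‖w‖ = 1 := by simp [w, norm_smul, hv0']
  have hAw : ‖A w‖ = ‖A v‖ / ‖v‖ := by simp [w, norm_smul, div_eq_inv_mul]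
  calc ENNReal.ofReal (2 * 4 ^ (finrank ℝ E - 1))⁻¹ * detOn A E
      ≤ ENNReal.ofReal (2 * 4 ^ (finrank ℝ E - 1))⁻¹ *
          ENNReal.ofReal (2 * ‖A w‖ * (4 * ‖A.comp E.subtypeL‖) ^ (finrank ℝ E - 1)) := by
        gcongr
        exact detOn_le_of_norm_eq_one A E hw
    _ = _ := by
        rw [← ENNReal.ofReal_mul (by positivity), hAw, mul_pow]
        congr 1
        field_simp

theorem statement14
    {B : Type*} [NormedAddCommGroup B] [NormedSpace ℝ B] [CompleteSpace B]
    [MeasurableSpace B] [BorelSpace B] (q : ℕ) :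
    ∃ c : ℝ, 0 < c ∧
      ∀ (A : B →L[ℝ] B) (E : Submodule ℝ B), FiniteDimensional ℝ E →
        Module.finrank ℝ E = q → ∀ v ∈ E, v ≠ 0 →
        ENNReal.ofReal c * detOn A E ≤
          ENNReal.ofReal ((‖A v‖ / ‖v‖) * ‖A.comp E.subtypeL‖ ^ (q - 1)) :=
  statement14_general q

end
end BanachMET
end

section
/- Let B be a real Banach space and A ∈ L(B). Then, with the convention log 0 = −∞, limsup_{q→∞} (1/q) log V_q(A) ≤ log(2 |A|_α). -/
open MeasureTheory Filter Metric Set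
open scoped ENNReal NNReal Topology

namespace BanachMET

noncomputable section

variable {B B' : Type*} [NormedAddCommGroup B] [NormedSpace ℝ B]
  [NormedAddCommGroup B'] [NormedSpace ℝ B']

/-!
If `A(B_1)` is covered by `N` balls of radius `r`, then for every `q`-dimensional `E` the image
`A(B_E)` lies in `N` balls of radius `2r` of the `q`-dimensional space `AE`, so that
`V_q(A) ≤ N (2r)^q`. Taking `q`-th roots, the constant `N` disappears in the limit and
`limsup (1/q) log V_q(A) ≤ log (2r)`; letting `r` decrease to `|A|_α` gives the claim.
-/

lemma measure_le_card_mul_of_subset_biUnion {X ι : Type*} [PseudoMetricSpace X]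
    [MeasurableSpace X] (μ : Measure X) {S : Set X} {t : Finset ι} {U : ι → Set X}
    (hS : S ⊆ ⋃ i ∈ t, U i) {d : ℝ}
    (hU : ∀ i ∈ t, ∀ x ∈ S ∩ U i, ∀ y ∈ S ∩ U i, dist x y ≤ d)
    {c : ℝ≥0∞} (hc : ∀ x ∈ S, μ (closedBall x d) ≤ c) :
    μ S ≤ t.card * c := by
  have hpiece : ∀ i ∈ t, μ (S ∩ U i) ≤ c := by
    intro i hi
    rcases (S ∩ U i).eq_empty_or_nonempty with hempty | ⟨x, hx⟩
    · simp [hempty]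
    · exact (measure_mono fun y hy => mem_closedBall.2 (hU i hi y hy x hx)).trans (hc x hx.1)
  calc μ S ≤ μ (⋃ i ∈ t, S ∩ U i) := by
        rw [← inter_iUnion₂]; exact measure_mono (subset_inter subset_rfl hS)
    _ ≤ ∑ i ∈ t, μ (S ∩ U i) := measure_biUnion_finset_le t _
    _ ≤ ∑ _i ∈ t, c := Finset.sum_le_sum hpiece
    _ = t.card * c := by rw [Finset.sum_const, nsmul_eq_mul]

lemma finrank_map_eq_of_injOn (A : B →L[ℝ] B') {E : Submodule ℝ B}
    (hinj : InjOn A (E : Set B)) :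
    Module.finrank ℝ (E.map (A : B →ₗ[ℝ] B')) = Module.finrank ℝ E := by
  have hinj' : Function.Injective ((A : B →ₗ[ℝ] B') ∘ₗ E.subtype) :=
    fun x y h => Subtype.ext (hinj x.2 y.2 h)
  rw [← LinearMap.finrank_range_of_inj hinj', LinearMap.range_comp, Submodule.range_subtype]

def coverRadii (A : B →L[ℝ] B') : Set ℝ :=
  {r | 0 < r ∧ ∃ s : Finset B', A '' closedBall 0 1 ⊆ ⋃ y ∈ s, ball y r}

lemma alphaMeasure_eq_sInf_coverRadii (A : B →L[ℝ] B') :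
    alphaMeasure A = sInf (coverRadii A) := rfl

lemma coverRadii_nonempty (A : B →L[ℝ] B') : (coverRadii A).Nonempty := by
  refine ⟨‖A‖ + 1, by positivity, {0}, ?_⟩
  rintro _ ⟨v, hv, rfl⟩
  simp only [Finset.mem_singleton, iUnion_iUnion_eq_left, mem_ball_zero_iff]
  calc ‖A v‖ ≤ ‖A‖ * ‖v‖ := A.le_opNorm v
    _ ≤ ‖A‖ := mul_le_of_le_one_right (norm_nonneg A) (mem_closedBall_zero_iff.1 hv)
    _ < ‖A‖ + 1 := lt_add_one _

section Volume
variable [MeasurableSpace B'] [BorelSpace B']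

lemma inducedVolume_closedBall
    (E : Submodule ℝ B') [FiniteDimensional ℝ E] (x : E) {s : ℝ} (hs : 0 ≤ s) :
    inducedVolume E (closedBall x s) =
      ENNReal.ofReal (s ^ Module.finrank ℝ E) * ballVol (Module.finrank ℝ E) := by
  set μ := (Module.finBasis ℝ E).addHaar
  have hball0 : μ (closedBall 0 1) ≠ 0 := (measure_closedBall_pos μ 0 one_pos).ne'
  have hball_top : μ (closedBall 0 1) ≠ ⊤ := (isCompact_closedBall _ _).measure_lt_top.ne
  rw [inducedVolume, dif_pos ‹_›, Measure.smul_apply, Measure.addHaar_closedBall' μ x hs,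
    smul_eq_mul, mul_left_comm, ENNReal.div_mul_cancel hball0 hball_top]

lemma detOn_le_of_subset_biUnion_ball (A : B →L[ℝ] B') {r : ℝ} (hr : 0 ≤ r) {t : Finset B'}
    (hcover : A '' closedBall 0 1 ⊆ ⋃ y ∈ t, ball y r)
    (E : Submodule ℝ B) [FiniteDimensional ℝ E] :
    detOn A E ≤ t.card * ENNReal.ofReal ((2 * r) ^ Module.finrank ℝ E) := by
  by_cases hinj : InjOn A (E : Set B)
  swap
  · simp [detOn, if_neg hinj]
  set F := E.map (A : B →ₗ[ℝ] B')
  have hrank : Module.finrank ℝ F = Module.finrank ℝ E := finrank_map_eq_of_injOn A hinj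
  have hsub : (Subtype.val ⁻¹' (A '' (Subtype.val '' closedBall (0 : E) 1)) : Set F) ⊆
      ⋃ y ∈ t, Subtype.val ⁻¹' ball y r := by
    rintro v ⟨w, ⟨u, hu, rfl⟩, hv⟩
    simpa [← hv] using hcover ⟨u, by simpa using hu, rfl⟩
  -- The centres `y` need not lie in `AE`, but each piece of the cover has diameter `≤ 2r`.
  have hdiam : ∀ y ∈ t, ∀ v ∈ (Subtype.val ⁻¹' ball y r : Set F),
      ∀ w ∈ (Subtype.val ⁻¹' ball y r : Set F), dist v w ≤ 2 * r := fun y _ v hv w hw =>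
    calc dist v w ≤ dist (v : B') y + dist (w : B') y := dist_triangle_right (v : B') w y
      _ ≤ 2 * r := by linarith [mem_ball.1 hv, mem_ball.1 hw]
  rw [detOn, if_pos hinj]
  refine ENNReal.div_le_of_le_mul ?_
  calc _ ≤ t.card * (ENNReal.ofReal ((2 * r) ^ Module.finrank ℝ F) *
        ballVol (Module.finrank ℝ F)) :=
        measure_le_card_mul_of_subset_biUnion _ hsub
          (fun y hy v hv w hw => hdiam y hy v hv.2 w hw.2)
          fun x _ => (inducedVolume_closedBall F x (by linarith)).le
    _ = _ := by rw [hrank, mul_assoc]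

lemma maxVol_le_of_subset_biUnion_ball (A : B →L[ℝ] B') {r : ℝ} (hr : 0 ≤ r) {t : Finset B'}
    (hcover : A '' closedBall 0 1 ⊆ ⋃ y ∈ t, ball y r) {q : ℕ} (hq : q ≠ 0) :
    maxVol q A ≤ t.card * ENNReal.ofReal ((2 * r) ^ q) := by
  rw [maxVol, if_neg hq]
  refine iSup₂_le fun E ⟨_, hrank⟩ => ?_
  simpa [hrank] using detOn_le_of_subset_biUnion_ball A hr hcover E

end Volume

lemma elogE_le_log_of_le_ofReal {a : ℝ≥0∞} {c : ℝ} (hc : 0 < c)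
    (h : a ≤ ENNReal.ofReal c) :
    elogE a ≤ Real.log c := by
  unfold elogE
  split_ifs with h0 htop
  · exact bot_le
  · exact absurd (htop ▸ h) (by simp)
  · exact EReal.coe_le_coe_iff.2
      (Real.log_le_log (ENNReal.toReal_pos h0 htop) (ENNReal.toReal_le_of_le_ofReal hc.le h))

lemma limsup_inv_mul_elogE_le_log {v : ℕ → ℝ≥0∞} {C a : ℝ} (hC : 0 < C) (ha : 0 < a)
    (hv : ∀ᶠ q in atTop, v q ≤ ENNReal.ofReal (C * a ^ q)) :
    limsup (fun q : ℕ => (((q : ℝ)⁻¹ : ℝ) : EReal) * elogE (v q)) atTop ≤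
      Real.log a := by
  set g : ℕ → ℝ := fun q => (q : ℝ)⁻¹ * Real.log C + Real.log a
  have hbound : ∀ᶠ q : ℕ in atTop,
      (((q : ℝ)⁻¹ : ℝ) : EReal) * elogE (v q) ≤ (g q : EReal) := by
    filter_upwards [hv, eventually_ne_atTop 0] with q hvq hq
    have hlog : (q : ℝ)⁻¹ * Real.log (C * a ^ q) = g q := by
      rw [Real.log_mul hC.ne' (pow_pos ha q).ne', Real.log_pow, mul_add, inv_mul_cancel_left₀]
      exact_mod_cast hq
    calc (((q : ℝ)⁻¹ : ℝ) : EReal) * elogE (v q)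
        ≤ (((q : ℝ)⁻¹ : ℝ) : EReal) * (Real.log (C * a ^ q) : ℝ) :=
          mul_le_mul_of_nonneg_left (elogE_le_log_of_le_ofReal (by positivity) hvq)
            (EReal.coe_nonneg.2 (by positivity))
      _ = (g q : EReal) := by rw [← EReal.coe_mul, hlog]
  have hg : Tendsto g atTop (𝓝 (Real.log a)) := by
    simpa using (tendsto_inv_atTop_zero.comp tendsto_natCast_atTop_atTop).mul_const (Real.log C)
      |>.add_const (Real.log a)
  exact (limsup_le_limsup hbound).trans_eq
    ((continuous_coe_real_ereal.tendsto _).comp hg).limsup_eq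

lemma le_elog_of_forall_lt_log {L : EReal} {x : ℝ}
    (h : ∀ y, x < y → 0 < y → L ≤ Real.log y) : L ≤ elog x := by
  induction L with
  | bot => exact bot_le
  | top => simpa using h (max x 0 + 1) (by linarith [le_max_left x 0]) (by positivity)
  | coe m =>
    by_cases hx : x ≤ 0
    · have := h (Real.exp (m - 1)) (hx.trans_lt (Real.exp_pos _)) (Real.exp_pos _)
      rw [Real.log_exp, EReal.coe_le_coe_iff] at this
      linarith
    · rw [elog, if_neg hx, EReal.coe_le_coe_iff, Real.le_log_iff_exp_le (not_le.1 hx)]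
      refine le_of_forall_gt_imp_ge_of_dense fun y hy => ?_
      have := h y hy (by linarith)
      rwa [EReal.coe_le_coe_iff, Real.le_log_iff_exp_le (by linarith)] at this

theorem statement18_general
    {B : Type*} [NormedAddCommGroup B] [NormedSpace ℝ B]
    [MeasurableSpace B] [BorelSpace B] (A : B →L[ℝ] B) :
    Filter.limsup (fun q : ℕ => (((q : ℝ)⁻¹ : ℝ) : EReal) * elogE (maxVol q A)) atTop ≤
      elog (2 * alphaMeasure A) := by
  refine le_elog_of_forall_lt_log fun y hy hy0 => ?_
  obtain ⟨r, ⟨hr, t, hcover⟩, hry⟩ : ∃ r ∈ coverRadii A, r < y / 2 :=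
    exists_lt_of_csInf_lt (coverRadii_nonempty A)
      (by rw [← alphaMeasure_eq_sInf_coverRadii]; linarith)
  have hvol : ∀ᶠ q in atTop, maxVol q A ≤ ENNReal.ofReal ((t.card + 1) * (2 * r) ^ q) := by
    filter_upwards [eventually_ne_atTop 0] with q hq
    calc maxVol q A ≤ t.card * ENNReal.ofReal ((2 * r) ^ q) :=
          maxVol_le_of_subset_biUnion_ball A hr.le hcover hq
      _ ≤ (t.card + 1) * ENNReal.ofReal ((2 * r) ^ q) := by gcongr; exact le_self_add
      _ = ENNReal.ofReal ((t.card + 1) * (2 * r) ^ q) := by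
          rw [ENNReal.ofReal_mul (by positivity), ENNReal.ofReal_add (by positivity) zero_le_one,
            ENNReal.ofReal_natCast, ENNReal.ofReal_one]
  calc _ ≤ ((Real.log (2 * r) : ℝ) : EReal) :=
        limsup_inv_mul_elogE_le_log (by positivity) (by positivity) hvol
    _ ≤ Real.log y := EReal.coe_le_coe_iff.2 (Real.log_le_log (by positivity) (by linarith))

theorem statement18
    {B : Type*} [NormedAddCommGroup B] [NormedSpace ℝ B] [CompleteSpace B]
    [MeasurableSpace B] [BorelSpace B] (A : B →L[ℝ] B) :
    Filter.limsup (fun q : ℕ => (((q : ℝ)⁻¹ : ℝ) : EReal) * elogE (maxVol q A)) atTop ≤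
      elog (2 * alphaMeasure A) :=
  statement18_general A

end
end BanachMET
end
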